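/- There exists a constant C > 0 such that for all integers n ≥ 1, n ∫_{[0,1]² ∖ [0,1/2]²} (1 − x y)^{n−1} dx dy ≤ C. Consequently, n ∫_{[0,1]²} (1−xy)^{n−1} g(x,y) dxdy = n ∫_{[0,1/2]²} (1−xy)^{n−1} g(x,y) dxdy + O(1) uniformly over measurable functions g with 0 ≤ g ≤ 1. -/

import Mathlib

open MeasureTheory Set

/-! On `[0,1]² ∖ [0,a]²` one coordinate is at least `a`, so the region is covered by the strip
`[a,1] × [0,1]` and its mirror image. On the strip `(1 - xy)^m ≤ (1 - ay)^m`, and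
`∫₀¹ (1 - ay)^m dy ≤ 1/(a(m+1))`, so `m + 1` times the integral over the region is at most
`2(1-a)/a`. For the weighted statement, the difference of the two integrals is the integral of
`(1 - xy)^{n-1} g` over the region, which lies between `0` and the unweighted one. -/

section SetIntegral

variable {X : Type*} [MeasurableSpace X] {μ : Measure X} {f g : X → ℝ} {s t u : Set X}

theorem setIntegral_le_add_of_subset_union (hstu : s ⊆ t ∪ u) (ht : MeasurableSet t)
    (hu : MeasurableSet u) (hf : ∀ x ∈ t ∪ u, 0 ≤ f x) (hft : IntegrableOn f t μ)
    (hfu : IntegrableOn f u μ) :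
    ∫ x in s, f x ∂μ ≤ ∫ x in t, f x ∂μ + ∫ x in u, f x ∂μ :=
  calc ∫ x in s, f x ∂μ ≤ ∫ x in t ∪ u, f x ∂μ :=
        setIntegral_mono_set (hft.union hfu) (ae_restrict_of_forall_mem (ht.union hu) hf)
          hstu.eventuallyLE
    _ = ∫ x in t, f x ∂μ + ∫ x in u \ t, f x ∂μ := by
        rw [← union_sdiff_self, setIntegral_union disjoint_sdiff_right (hu.diff ht) hft
          (hfu.mono_set sdiff_subset)]
    _ ≤ ∫ x in t, f x ∂μ + ∫ x in u, f x ∂μ := by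
        grw [setIntegral_mono_set hfu (ae_restrict_of_forall_mem hu fun x hx => hf x (.inr hx))
          sdiff_subset.eventuallyLE]

theorem abs_setIntegral_mul_sub_setIntegral_mul_le (hst : s ⊆ t) (hs : MeasurableSet s)
    (ht : MeasurableSet t) (hf : IntegrableOn f t μ) (hf0 : ∀ x ∈ t, 0 ≤ f x)
    (hg : AEStronglyMeasurable g (μ.restrict t)) (hg01 : ∀ x ∈ t, 0 ≤ g x ∧ g x ≤ 1) :
    |∫ x in t, f x * g x ∂μ - ∫ x in s, f x * g x ∂μ| ≤ ∫ x in t \ s, f x ∂μ := by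
  have hfg : IntegrableOn (fun x => f x * g x) t μ :=
    hf.mul_bdd hg (c := 1) <| ae_restrict_of_forall_mem ht fun x hx => by
      rw [Real.norm_eq_abs, abs_le]; constructor <;> linarith [hg01 x hx]
  rw [← setIntegral_sdiff hs hfg hst, abs_of_nonneg]
  · refine setIntegral_mono_on (hfg.mono_set sdiff_subset) (hf.mono_set sdiff_subset)
      (ht.diff hs) fun x hx => ?_
    exact mul_le_of_le_one_right (hf0 x hx.1) (hg01 x hx.1).2
  · exact setIntegral_nonneg (ht.diff hs) fun x hx => mul_nonneg (hf0 x hx.1) (hg01 x hx.1).1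

end SetIntegral

theorem integral_one_sub_mul_pow {c : ℝ} (hc : c ≠ 0) (m : ℕ) :
    ∫ y in (0:ℝ)..1, (1 - c * y) ^ m = (1 - (1 - c) ^ (m + 1)) / (c * (m + 1)) := by
  rw [intervalIntegral.integral_comp_sub_mul (fun x => x ^ m) hc, integral_pow]
  simp only [smul_eq_mul, mul_zero, sub_zero, mul_one, one_pow]
  rw [mul_comm c, ← div_div, div_eq_inv_mul _ c]

theorem mul_setIntegral_one_sub_mul_pow_le {c : ℝ} (hc0 : 0 < c) (hc1 : c ≤ 1) (m : ℕ) :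
    (m + 1) * ∫ y in Icc (0:ℝ) 1, (1 - c * y) ^ m ≤ 1 / c := by
  rw [integral_Icc_eq_integral_Ioc, ← intervalIntegral.integral_of_le zero_le_one,
    integral_one_sub_mul_pow hc0.ne']
  have : 0 ≤ (1 - c) ^ (m + 1) := pow_nonneg (by linarith) _
  field_simp
  linarith

theorem integrableOn_one_sub_mul_pow (m : ℕ) {K : Set (ℝ × ℝ)} (hK : IsCompact K) :
    IntegrableOn (fun p : ℝ × ℝ => (1 - p.1 * p.2) ^ m) K :=
  (by fun_prop : Continuous fun p : ℝ × ℝ => (1 - p.1 * p.2) ^ m).continuousOn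
    |>.integrableOn_compact hK

theorem one_sub_mul_pow_nonneg (m : ℕ) {p : ℝ × ℝ}
    (hp : p ∈ Icc (0:ℝ) 1 ×ˢ Icc (0:ℝ) 1) : 0 ≤ (1 - p.1 * p.2) ^ m := by
  obtain ⟨⟨hx0, hx1⟩, hy0, hy1⟩ := hp
  exact pow_nonneg (by nlinarith) m

theorem mul_setIntegral_strip_le {a : ℝ} (ha0 : 0 < a) (ha1 : a ≤ 1) (m : ℕ) :
    (m + 1) * ∫ p in Icc a 1 ×ˢ Icc (0:ℝ) 1, (1 - p.1 * p.2) ^ m ≤ (1 - a) / a := by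
  have hdom : ∫ p in Icc a 1 ×ˢ Icc (0:ℝ) 1, (1 - p.1 * p.2) ^ m
      ≤ ∫ p in Icc a 1 ×ˢ Icc (0:ℝ) 1, (1 - a * p.2) ^ m := by
    refine setIntegral_mono_on
      (integrableOn_one_sub_mul_pow m (isCompact_Icc.prod isCompact_Icc))
      ((by fun_prop : Continuous fun p : ℝ × ℝ => (1 - a * p.2) ^ m).continuousOn
        |>.integrableOn_compact (isCompact_Icc.prod isCompact_Icc))
      (measurableSet_Icc.prod measurableSet_Icc) fun p ⟨⟨hx0, hx1⟩, hy0, hy1⟩ => ?_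
    exact pow_le_pow_left₀ (by nlinarith) (by nlinarith) m
  have hfactor : ∫ p in Icc a 1 ×ˢ Icc (0:ℝ) 1, (1 - a * p.2) ^ m
      = (1 - a) * ∫ y in Icc (0:ℝ) 1, (1 - a * y) ^ m := by
    rw [Measure.volume_eq_prod]
    simpa only [one_mul, setIntegral_const, Real.volume_real_Icc_of_le ha1, smul_eq_mul, mul_one]
      using setIntegral_prod_mul (μ := volume) (ν := volume) (fun _ => (1 : ℝ))
        (fun y => (1 - a * y) ^ m) (Icc a 1) (Icc 0 1)
  calc (m + 1) * ∫ p in Icc a 1 ×ˢ Icc (0:ℝ) 1, (1 - p.1 * p.2) ^ m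
      ≤ (1 - a) * ((m + 1) * ∫ y in Icc (0:ℝ) 1, (1 - a * y) ^ m) := by
        rw [mul_left_comm, ← hfactor]; gcongr
    _ ≤ (1 - a) * (1 / a) := by
        gcongr
        exact mul_setIntegral_one_sub_mul_pow_le ha0 ha1 m
    _ = (1 - a) / a := by ring

theorem mul_setIntegral_unitSquare_sdiff_le {a : ℝ} (ha0 : 0 < a) (ha1 : a ≤ 1) (m : ℕ) :
    (m + 1) * ∫ p in (Icc (0:ℝ) 1 ×ˢ Icc (0:ℝ) 1) \ (Icc (0:ℝ) a ×ˢ Icc (0:ℝ) a),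
      (1 - p.1 * p.2) ^ m ≤ 2 * ((1 - a) / a) := by
  have hcover : (Icc (0:ℝ) 1 ×ˢ Icc (0:ℝ) 1) \ (Icc (0:ℝ) a ×ˢ Icc (0:ℝ) a)
      ⊆ Icc a 1 ×ˢ Icc 0 1 ∪ Icc 0 1 ×ˢ Icc a 1 := by
    rintro ⟨x, y⟩ ⟨⟨⟨hx0, hx1⟩, hy0, hy1⟩, hxy⟩
    by_cases hx : a ≤ x
    · exact .inl ⟨⟨hx, hx1⟩, hy0, hy1⟩
    · exact .inr ⟨⟨hx0, hx1⟩,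
        le_of_not_ge fun hy => hxy ⟨⟨hx0, (not_le.1 hx).le⟩, hy0, hy⟩, hy1⟩
  have hstrips :
      Icc a 1 ×ˢ Icc 0 1 ∪ Icc 0 1 ×ˢ Icc a 1 ⊆ Icc (0:ℝ) 1 ×ˢ Icc (0:ℝ) 1 :=
    union_subset (prod_mono (Icc_subset_Icc_left ha0.le) subset_rfl)
      (prod_mono subset_rfl (Icc_subset_Icc_left ha0.le))
  have hswap : ∫ p in Icc (0:ℝ) 1 ×ˢ Icc a 1, (1 - p.1 * p.2) ^ m
      = ∫ p in Icc a 1 ×ˢ Icc (0:ℝ) 1, (1 - p.1 * p.2) ^ m := by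
    rw [← preimage_swap_prod, Measure.volume_eq_prod]
    simpa only [Prod.fst_swap, Prod.snd_swap, mul_comm] using
      Measure.measurePreserving_swap.setIntegral_preimage_emb
        MeasurableEquiv.prodComm.measurableEmbedding (fun p : ℝ × ℝ => (1 - p.1 * p.2) ^ m) _
  have hunion := setIntegral_le_add_of_subset_union (μ := volume) hcover
    (measurableSet_Icc.prod measurableSet_Icc) (measurableSet_Icc.prod measurableSet_Icc)
    (fun p hp => one_sub_mul_pow_nonneg m (hstrips hp))
    (integrableOn_one_sub_mul_pow m (isCompact_Icc.prod isCompact_Icc))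
    (integrableOn_one_sub_mul_pow m (isCompact_Icc.prod isCompact_Icc))
  rw [hswap] at hunion
  calc (m + 1) * ∫ p in (Icc (0:ℝ) 1 ×ˢ Icc (0:ℝ) 1) \ (Icc (0:ℝ) a ×ˢ Icc (0:ℝ) a),
        (1 - p.1 * p.2) ^ m
      ≤ (m + 1) * (2 * ∫ p in Icc a 1 ×ˢ Icc (0:ℝ) 1, (1 - p.1 * p.2) ^ m) := by
        rw [two_mul]; gcongr
    _ = 2 * ((m + 1) * ∫ p in Icc a 1 ×ˢ Icc (0:ℝ) 1, (1 - p.1 * p.2) ^ m) := by ring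
    _ ≤ 2 * ((1 - a) / a) := by grw [mul_setIntegral_strip_le ha0 ha1 m]

/-- The contribution of `[0,1]² ∖ [0,1/2]²` to `n ∫ (1−xy)^{n−1}` is bounded
uniformly in `n`; consequently, restricting such integrals (against any
measurable `0 ≤ g ≤ 1`) to `[0,1/2]²` only changes them by `O(1)`. -/
theorem integral_outside_subsquare_bounded :
    ∃ C > 0,
      (∀ n : ℕ, 1 ≤ n →
        (n : ℝ) * ∫ p in (Set.Icc (0:ℝ) 1 ×ˢ Set.Icc (0:ℝ) 1) \
            (Set.Icc (0:ℝ) (1/2) ×ˢ Set.Icc (0:ℝ) (1/2)),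
          (1 - p.1 * p.2) ^ (n - 1) ≤ C) ∧
      (∀ n : ℕ, 1 ≤ n → ∀ g : ℝ × ℝ → ℝ, Measurable g →
        (∀ p, 0 ≤ g p ∧ g p ≤ 1) →
        |(n : ℝ) * (∫ p in Set.Icc (0:ℝ) 1 ×ˢ Set.Icc (0:ℝ) 1,
            (1 - p.1 * p.2) ^ (n - 1) * g p)
          - (n : ℝ) * (∫ p in Set.Icc (0:ℝ) (1/2) ×ˢ Set.Icc (0:ℝ) (1/2),
            (1 - p.1 * p.2) ^ (n - 1) * g p)| ≤ C) := by
  have houtside : ∀ n : ℕ, 1 ≤ n →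
      (n : ℝ) * ∫ p in (Icc (0:ℝ) 1 ×ˢ Icc (0:ℝ) 1) \
          (Icc (0:ℝ) (1/2) ×ˢ Icc (0:ℝ) (1/2)), (1 - p.1 * p.2) ^ (n - 1) ≤ 2 := by
    intro n hn
    obtain ⟨m, rfl⟩ := Nat.exists_eq_add_of_le' hn
    have := mul_setIntegral_unitSquare_sdiff_le (a := 1/2) (by norm_num) (by norm_num) m
    norm_num at this ⊢
    exact this
  refine ⟨2, two_pos, houtside, fun n hn g hg hg01 => ?_⟩
  have hsub : Icc (0:ℝ) (1/2) ×ˢ Icc (0:ℝ) (1/2) ⊆ Icc (0:ℝ) 1 ×ˢ Icc (0:ℝ) 1 :=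
    prod_mono (Icc_subset_Icc_right (by norm_num)) (Icc_subset_Icc_right (by norm_num))
  rw [← mul_sub, abs_mul, Nat.abs_cast]
  grw [abs_setIntegral_mul_sub_setIntegral_mul_le hsub
    (measurableSet_Icc.prod measurableSet_Icc) (measurableSet_Icc.prod measurableSet_Icc)
    (integrableOn_one_sub_mul_pow _ (isCompact_Icc.prod isCompact_Icc))
    (fun p hp => one_sub_mul_pow_nonneg _ hp) hg.aestronglyMeasurable fun p _ => hg01 p]
  exact houtside n hn
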